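/- arXiv:1909.01103 — 2 statements merged into one kernel-verified Lean document; each statement's English description precedes it below -/
import Mathlib

section
/- For all α > 0, θ > 0 and β > 0, the fourth raw moment of the extended xgamma distribution is ∫₀^∞ x⁴ · f(x; α, θ, β) dx = ((α+2)·(α+3) · (θ·α·(α+1) + β·(α+4)·(α+5))) / (θ⁴·(θ+β)). -/
open MeasureTheory Real Set

/-!
Expanding the quadratic factor of the density writes `xⁿ f(x)` as a combination of the gamma
kernels `x^(α+n-1) e^(-θx)` and `x^(α+n+1) e^(-θx)`, whose integrals are `Γ(α+n)/θ^(α+n)` and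
`Γ(α+n+2)/θ^(α+n+2)`. Writing `Γ(α+n) = (α)ₙ Γ(α)` and `Γ(α+n+2) = (α+2)ₙ Γ(α+2)` with rising
factorials, the normalising constant cancels and `E[Xⁿ] = (θ (α)ₙ + β (α+2)ₙ) / (θⁿ (θ+β))`;
the case `n = 4` is the theorem.
-/

theorem Real.Gamma_add_natCast_eq_ascPochhammer_eval_mul {s : ℝ} (hs : ∀ k : ℕ, s ≠ -k) (n : ℕ) :
    Gamma (s + n) = (ascPochhammer ℝ n).eval s * Gamma s := by
  induction n with
  | zero => simp
  | succ n ih =>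
    have hsn : s + n ≠ 0 := fun h => hs n (eq_neg_of_add_eq_zero_left h)
    rw [Nat.cast_succ, ← add_assoc, Gamma_add_one hsn, ih, ascPochhammer_succ_eval]
    ring

lemma integral_pow_mul_rpow_mul_exp_neg_mul_Ioi {a r : ℝ} (ha : 0 < a) (hr : 0 < r) (n : ℕ) :
    ∫ x in Ioi 0, x ^ n * (x ^ (a - 1) * exp (-(r * x))) = Gamma (a + n) / r ^ (a + n) := by
  have hshift : ∀ x ∈ Ioi (0 : ℝ),
      x ^ n * (x ^ (a - 1) * exp (-(r * x))) = x ^ (a + n - 1) * exp (-(r * x)) := by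
    intro x hx
    rw [add_sub_right_comm, rpow_add_natCast (ne_of_gt hx), ← mul_assoc, mul_comm (x ^ n)]
  rw [setIntegral_congr_fun measurableSet_Ioi hshift,
    integral_rpow_mul_exp_neg_mul_Ioi (by positivity) hr, div_rpow zero_le_one hr.le, one_rpow,
    one_div_mul_eq_div]

lemma integrableOn_pow_mul_rpow_mul_exp_neg_mul_Ioi {a r : ℝ} (ha : 0 < a) (hr : 0 < r) (n : ℕ) :
    IntegrableOn (fun x => x ^ n * (x ^ (a - 1) * exp (-(r * x)))) (Ioi 0) :=
  .of_integral_ne_zero <| by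
    rw [integral_pow_mul_rpow_mul_exp_neg_mul_Ioi ha hr]
    exact (div_pos (Gamma_pos_of_pos (by positivity)) (by positivity)).ne'

noncomputable def exgPDF (α θ β x : ℝ) : ℝ :=
  θ ^ (α + 1) / ((θ + β) * Gamma (α + 2)) * (α ^ 2 + α + θ * β * x ^ 2) * exp (-θ * x) * x ^ (α - 1)

theorem integral_pow_mul_exgPDF {α θ : ℝ} (β : ℝ) (hα : 0 < α) (hθ : 0 < θ) (n : ℕ) :
    ∫ x in Ioi 0, x ^ n * exgPDF α θ β x
      = (θ * (ascPochhammer ℝ n).eval α + β * (ascPochhammer ℝ n).eval (α + 2))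
          / (θ ^ n * (θ + β)) := by
  set C := θ ^ (α + 1) / ((θ + β) * Gamma (α + 2)) with hC
  have hsplit : ∀ x, x ^ n * exgPDF α θ β x
      = C * (α ^ 2 + α) * (x ^ n * (x ^ (α - 1) * exp (-(θ * x))))
        + C * (θ * β) * (x ^ (n + 2) * (x ^ (α - 1) * exp (-(θ * x)))) := by
    intro x
    simp only [exgPDF, neg_mul]
    ring
  simp only [hsplit]
  rw [integral_add ((integrableOn_pow_mul_rpow_mul_exp_neg_mul_Ioi hα hθ n).const_mul _)
      ((integrableOn_pow_mul_rpow_mul_exp_neg_mul_Ioi hα hθ (n + 2)).const_mul _),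
    integral_const_mul, integral_const_mul, integral_pow_mul_rpow_mul_exp_neg_mul_Ioi hα hθ,
    integral_pow_mul_rpow_mul_exp_neg_mul_Ioi hα hθ, hC]
  have hne : ∀ s : ℝ, 0 < s → ∀ k : ℕ, s ≠ -k := fun s hs k => by
    have : (0 : ℝ) ≤ k := k.cast_nonneg
    linarith
  have hΓn := Gamma_add_natCast_eq_ascPochhammer_eval_mul (hne α hα) n
  have hΓn2 : Gamma (α + ↑(n + 2)) = (ascPochhammer ℝ n).eval (α + 2) * Gamma (α + 2) := by
    rw [show α + ↑(n + 2) = α + 2 + n by push_cast; ring]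
    exact Gamma_add_natCast_eq_ascPochhammer_eval_mul (hne _ (by positivity)) n
  have hΓ2 : Gamma (α + 2) = (α ^ 2 + α) * Gamma α := by
    rw [show (2 : ℝ) = (2 : ℕ) by norm_num, Gamma_add_natCast_eq_ascPochhammer_eval_mul (hne α hα)]
    simp only [ascPochhammer_succ_eval, ascPochhammer_zero, Polynomial.eval_one]
    push_cast
    ring
  rw [hΓn, hΓn2, hΓ2, rpow_add_one hθ.ne', rpow_add_natCast hθ.ne', rpow_add_natCast hθ.ne']
  rcases eq_or_ne (θ + β) 0 with hθβ | hθβ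
  · -- both sides are `0` through the convention `x / 0 = 0`
    simp [hθβ]
  · field_simp
    ring

theorem exg_fourth_moment_general (α θ β : ℝ) (hα : 0 < α) (hθ : 0 < θ) :
    ∫ x in Set.Ioi (0 : ℝ),
        x ^ 4 * ((θ ^ (α + 1) / ((θ + β) * Real.Gamma (α + 2))) * (α ^ 2 + α + θ * β * x ^ 2) *
          Real.exp (-θ * x) * x ^ (α - 1))
      = ((α + 2) * (α + 3) * (θ * α * (α + 1) + β * (α + 4) * (α + 5))) / (θ ^ 4 * (θ + β)) := by
  refine (integral_pow_mul_exgPDF β hα hθ 4).trans ?_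
  simp only [ascPochhammer_succ_eval, ascPochhammer_zero, Polynomial.eval_one]
  push_cast
  ring

/-- The fourth raw moment of the extended xgamma distribution. -/
theorem exg_fourth_moment (α θ β : ℝ) (hα : 0 < α) (hθ : 0 < θ) (hβ : 0 < β) :
    ∫ x in Set.Ioi (0 : ℝ),
        x ^ 4 * ((θ ^ (α + 1) / ((θ + β) * Real.Gamma (α + 2))) * (α ^ 2 + α + θ * β * x ^ 2) *
          Real.exp (-θ * x) * x ^ (α - 1))
      = ((α + 2) * (α + 3) * (θ * α * (α + 1) + β * (α + 4) * (α + 5))) / (θ ^ 4 * (θ + β)) :=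
  exg_fourth_moment_general α θ β hα hθ
end

section
/- For all α > 0, θ > 0 and β > 0, the variance of the extended xgamma distribution satisfies ∫₀^∞ x² · f(x; α, θ, β) dx − (∫₀^∞ x · f(x; α, θ, β) dx)² = (θ·α·(α+1) + β·(α+2)·(α+3)) / (θ²·(θ+β)) − ((θ·α + β·(α+2)) / (θ·(θ+β)))². -/
/-!
On `x > 0` the extended xgamma density is the mixture
`θ / (θ + β) · Gamma(α, θ) + β / (θ + β) · Gamma(α + 2, θ)` of two gamma densities with the
same rate. A gamma law `Gamma(a, r)` has moments `a / r` and `a (a + 1) / r ^ 2`, so both moments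
of the mixture are explicit, and the variance follows by algebra.
-/

open MeasureTheory Real Set ProbabilityTheory

section GammaMoments

variable {a r : ℝ}

lemma pow_mul_gammaPDFReal_of_pos {x : ℝ} (hx : 0 < x) (k : ℕ) :
    x ^ k * gammaPDFReal a r x = r ^ a / Gamma a * (x ^ (a + k - 1) * exp (-(r * x))) := by
  rw [gammaPDFReal, if_pos hx.le, add_sub_right_comm, rpow_add_natCast hx.ne']
  ring

lemma integrableOn_pow_mul_gammaPDFReal (ha : 0 < a) (hr : 0 < r) (k : ℕ) :
    IntegrableOn (fun x ↦ x ^ k * gammaPDFReal a r x) (Ioi 0) := by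
  have h := integrableOn_rpow_mul_exp_neg_mul_rpow (s := a + k - 1) (p := 1)
    (by linarith [k.cast_nonneg (α := ℝ)]) one_pos hr
  refine IntegrableOn.congr_fun (h.const_mul (r ^ a / Gamma a)) (fun x hx ↦ ?_) measurableSet_Ioi
  rw [pow_mul_gammaPDFReal_of_pos hx, rpow_one, neg_mul]

lemma integral_pow_mul_gammaPDFReal (ha : 0 < a) (hr : 0 < r) (k : ℕ) :
    ∫ x in Ioi 0, x ^ k * gammaPDFReal a r x = Gamma (a + k) / (Gamma a * r ^ k) := by
  rw [setIntegral_congr_fun measurableSet_Ioi fun x hx ↦ pow_mul_gammaPDFReal_of_pos hx k,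
    integral_const_mul, integral_rpow_mul_exp_neg_mul_Ioi (by positivity) hr,
    one_div, inv_rpow hr.le, rpow_add_natCast hr.ne']
  have := (Gamma_pos_of_pos ha).ne'
  field_simp

lemma integral_mul_gammaPDFReal (ha : 0 < a) (hr : 0 < r) :
    ∫ x in Ioi 0, x * gammaPDFReal a r x = a / r := by
  have h := integral_pow_mul_gammaPDFReal ha hr 1
  simp only [pow_one, Nat.cast_one, Gamma_add_one ha.ne'] at h
  rw [h, mul_comm (Gamma a), mul_div_mul_right _ _ (Gamma_pos_of_pos ha).ne']

lemma integral_sq_mul_gammaPDFReal (ha : 0 < a) (hr : 0 < r) :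
    ∫ x in Ioi 0, x ^ 2 * gammaPDFReal a r x = a * (a + 1) / r ^ 2 := by
  have h := integral_pow_mul_gammaPDFReal ha hr 2
  rw [h, show a + (2 : ℕ) = a + 1 + 1 by push_cast; ring, Gamma_add_one (by positivity),
    Gamma_add_one ha.ne']
  have := (Gamma_pos_of_pos ha).ne'
  field_simp

end GammaMoments

noncomputable def exgDensity (α θ β x : ℝ) : ℝ :=
  θ ^ (α + 1) / ((θ + β) * Gamma (α + 2)) * (α ^ 2 + α + θ * β * x ^ 2) *
    exp (-θ * x) * x ^ (α - 1)

section ExtendedXgamma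

variable {α θ β : ℝ}

lemma exgDensity_eq_mixture (hα : 0 < α) (hθ : 0 < θ) {x : ℝ} (hx : 0 < x) :
    exgDensity α θ β x =
      θ / (θ + β) * gammaPDFReal α θ x + β / (θ + β) * gammaPDFReal (α + 2) θ x := by
  have hΓ : Gamma (α + 2) = (α + 1) * (α * Gamma α) := by
    rw [show α + 2 = α + 1 + 1 by ring, Gamma_add_one (by positivity), Gamma_add_one hα.ne']
  have hx2 : x ^ (α + 2 - 1) = x ^ (α - 1) * x ^ 2 := by
    rw [show α + 2 - 1 = α - 1 + (2 : ℕ) by push_cast; ring, rpow_add_natCast hx.ne']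
  have hθ2 : θ ^ (α + 2) = θ ^ α * θ ^ 2 := by
    rw [show α + 2 = α + (2 : ℕ) by push_cast; ring, rpow_add_natCast hθ.ne']
  rw [exgDensity, gammaPDFReal, gammaPDFReal, if_pos hx.le, if_pos hx.le, hΓ, hx2, hθ2,
    rpow_add_one hθ.ne', neg_mul]
  have := (Gamma_pos_of_pos hα).ne'
  field_simp

lemma integral_pow_mul_exgDensity (hα : 0 < α) (hθ : 0 < θ) (k : ℕ) :
    ∫ x in Ioi 0, x ^ k * exgDensity α θ β x =
      θ / (θ + β) * (∫ x in Ioi 0, x ^ k * gammaPDFReal α θ x) +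
        β / (θ + β) * ∫ x in Ioi 0, x ^ k * gammaPDFReal (α + 2) θ x := by
  have hmix : ∀ x ∈ Ioi (0 : ℝ), x ^ k * exgDensity α θ β x =
      θ / (θ + β) * (x ^ k * gammaPDFReal α θ x) +
        β / (θ + β) * (x ^ k * gammaPDFReal (α + 2) θ x) := fun x hx ↦ by
    rw [exgDensity_eq_mixture hα hθ hx]
    ring
  rw [setIntegral_congr_fun measurableSet_Ioi hmix, integral_add
    ((integrableOn_pow_mul_gammaPDFReal hα hθ k).const_mul _)
    ((integrableOn_pow_mul_gammaPDFReal (by positivity) hθ k).const_mul _),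
    integral_const_mul, integral_const_mul]

end ExtendedXgamma

theorem exg_variance_general (α θ β : ℝ) (hα : 0 < α) (hθ : 0 < θ) :
    (∫ x in Set.Ioi (0 : ℝ),
        x ^ 2 * ((θ ^ (α + 1) / ((θ + β) * Real.Gamma (α + 2))) * (α ^ 2 + α + θ * β * x ^ 2) *
          Real.exp (-θ * x) * x ^ (α - 1)))
      - (∫ x in Set.Ioi (0 : ℝ),
          x * ((θ ^ (α + 1) / ((θ + β) * Real.Gamma (α + 2))) * (α ^ 2 + α + θ * β * x ^ 2) *
            Real.exp (-θ * x) * x ^ (α - 1))) ^ 2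
      = (θ * α * (α + 1) + β * (α + 2) * (α + 3)) / (θ ^ 2 * (θ + β))
        - ((θ * α + β * (α + 2)) / (θ * (θ + β))) ^ 2 := by
  have hα2 : 0 < α + 2 := by positivity
  have mean := integral_pow_mul_exgDensity (β := β) hα hθ 1
  simp only [pow_one] at mean
  rw [integral_mul_gammaPDFReal hα hθ, integral_mul_gammaPDFReal hα2 hθ] at mean
  have second := integral_pow_mul_exgDensity (β := β) hα hθ 2
  rw [integral_sq_mul_gammaPDFReal hα hθ, integral_sq_mul_gammaPDFReal hα2 hθ] at second
  change (∫ x in Ioi 0, x ^ 2 * exgDensity α θ β x) -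
    (∫ x in Ioi 0, x * exgDensity α θ β x) ^ 2 = _
  rw [mean, second]
  field_simp
  ring

/-- The variance of the extended xgamma distribution. -/
theorem exg_variance (α θ β : ℝ) (hα : 0 < α) (hθ : 0 < θ) (hβ : 0 < β) :
    (∫ x in Set.Ioi (0 : ℝ),
        x ^ 2 * ((θ ^ (α + 1) / ((θ + β) * Real.Gamma (α + 2))) * (α ^ 2 + α + θ * β * x ^ 2) *
          Real.exp (-θ * x) * x ^ (α - 1)))
      - (∫ x in Set.Ioi (0 : ℝ),
          x * ((θ ^ (α + 1) / ((θ + β) * Real.Gamma (α + 2))) * (α ^ 2 + α + θ * β * x ^ 2) *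
            Real.exp (-θ * x) * x ^ (α - 1))) ^ 2
      = (θ * α * (α + 1) + β * (α + 2) * (α + 3)) / (θ ^ 2 * (θ + β))
        - ((θ * α + β * (α + 2)) / (θ * (θ + β))) ^ 2 :=
  exg_variance_general α θ β hα hθ
end
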